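/- In the standing setup with dim U > 1, for each i = 1,2,3 the polynomial function Δ_i is divisible both by p₀ and by p'₀ in the ring k[V×V] of polynomial functions on V×V. -/

import Mathlib

open TensorProduct LinearMap

noncomputable section

variable (k V : Type) [Field k] [AddCommGroup V] [Module k V]

/-- `R ⊗ Id` acting on `V ⊗ (V ⊗ V)`. -/
def op12 (R : V ⊗[k] V →ₗ[k] V ⊗[k] V) :
    V ⊗[k] (V ⊗[k] V) →ₗ[k] V ⊗[k] (V ⊗[k] V) :=
  (TensorProduct.assoc k V V V).toLinearMap ∘ₗ LinearMap.rTensor V R ∘ₗ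
    (TensorProduct.assoc k V V V).symm.toLinearMap

/-- `Id ⊗ R` acting on `V ⊗ (V ⊗ V)`. -/
def op23 (R : V ⊗[k] V →ₗ[k] V ⊗[k] V) :
    V ⊗[k] (V ⊗[k] V) →ₗ[k] V ⊗[k] (V ⊗[k] V) :=
  LinearMap.lTensor V R

/-- A Hecke symmetry with parameter `q`: an operator on `V ⊗ V` satisfying the braid
equation and the Hecke relation `(R - q·Id)(R + Id) = 0`, with `q ≠ 0`. -/
def IsHeckeSymmetry (q : k) (R : V ⊗[k] V →ₗ[k] V ⊗[k] V) : Prop :=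
  q ≠ 0 ∧
    op12 k V R ∘ₗ op23 k V R ∘ₗ op12 k V R = op23 k V R ∘ₗ op12 k V R ∘ₗ op23 k V R ∧
    (R - q • LinearMap.id) ∘ₗ (R + LinearMap.id) = 0

/-- `x ⋏ y = ζ(x) ⊗ y - ζ(y) ⊗ x`. -/
def wedge2 (ζ : V ≃ₗ[k] V) (x y : V) : V ⊗[k] V := ζ x ⊗ₜ[k] y - ζ y ⊗ₜ[k] x

/-- `Υ²`, the span of the tensors `x ⋏ y`. -/
def Ups2 (ζ : V ≃ₗ[k] V) : Submodule k (V ⊗[k] V) :=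
  Submodule.span k {w : V ⊗[k] V | ∃ x y : V, w = wedge2 k V ζ x y}

/-- `x ⋏ y ⋏ z`. -/
def wedge3 (ζ : V ≃ₗ[k] V) (x y z : V) : V ⊗[k] (V ⊗[k] V) :=
  ζ (ζ x) ⊗ₜ[k] (ζ y ⊗ₜ[k] z) + ζ (ζ y) ⊗ₜ[k] (ζ z ⊗ₜ[k] x) + ζ (ζ z) ⊗ₜ[k] (ζ x ⊗ₜ[k] y)
    - ζ (ζ x) ⊗ₜ[k] (ζ z ⊗ₜ[k] y) - ζ (ζ y) ⊗ₜ[k] (ζ x ⊗ₜ[k] z) - ζ (ζ z) ⊗ₜ[k] (ζ y ⊗ₜ[k] x)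

/-- `Υ³`, the span of the tensors `x ⋏ y ⋏ z` (which coincides with
`(V ⊗ Υ²) ∩ (Υ² ⊗ V)`). -/
def Ups3 (ζ : V ≃ₗ[k] V) : Submodule k (V ⊗[k] (V ⊗[k] V)) :=
  Submodule.span k {t : V ⊗[k] (V ⊗[k] V) | ∃ x y z : V, t = wedge3 k V ζ x y z}

/-- The bilinear extension `w ↦ x ⋏ w` of the wedge multiplication `V × Υ² → Υ³`:
on elements of `Υ²` it satisfies `x ⋏ (y ⋏ z) = x ⋏ y ⋏ z`. -/
def wedge31 (ζ : V ≃ₗ[k] V) (x : V) : V ⊗[k] V →ₗ[k] V ⊗[k] (V ⊗[k] V) :=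
  TensorProduct.mk k V (V ⊗[k] V) (ζ (ζ x)) +
    (TensorProduct.assoc k V V V).toLinearMap ∘ₗ
      ((TensorProduct.mk k (V ⊗[k] V) V).flip x ∘ₗ
        TensorProduct.map ζ.toLinearMap ζ.toLinearMap) -
    TensorProduct.map ζ.toLinearMap (TensorProduct.mk k V V (ζ x))

/-- The skewsymmetrizer `Y = q·Id - R`. -/
def skewY (q : k) (R : V ⊗[k] V →ₗ[k] V ⊗[k] V) : V ⊗[k] V →ₗ[k] V ⊗[k] V :=
  q • LinearMap.id - R

/-- `R' = (ζ⁻¹ ⊗ ζ⁻¹) ∘ R ∘ (ζ ⊗ ζ)`. -/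
def Rprime (ζ : V ≃ₗ[k] V) (R : V ⊗[k] V →ₗ[k] V ⊗[k] V) :
    V ⊗[k] V →ₗ[k] V ⊗[k] V :=
  TensorProduct.map ζ.symm.toLinearMap ζ.symm.toLinearMap ∘ₗ R ∘ₗ
    TensorProduct.map ζ.toLinearMap ζ.toLinearMap

/-- `ℓ_{xy}(z) = ω̃(x ⋏ Y(ζ(y) ⊗ z))`, where `Ω` is a linear extension of `ω̃` to
`V ⊗ V ⊗ V`. -/
def ell (ζ : V ≃ₗ[k] V) (Y : V ⊗[k] V →ₗ[k] V ⊗[k] V)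
    (Ω : V ⊗[k] (V ⊗[k] V) →ₗ[k] k) (x y : V) : Module.Dual k V :=
  Ω ∘ₗ wedge31 k V ζ x ∘ₗ Y ∘ₗ TensorProduct.mk k V V (ζ y)

/-- The linear forms `ℓ_{xy}` associated with the Hecke symmetry `R`. -/
def ellF (ζ : V ≃ₗ[k] V) (q : k) (R : V ⊗[k] V →ₗ[k] V ⊗[k] V)
    (Ω : V ⊗[k] (V ⊗[k] V) →ₗ[k] k) (x y : V) : Module.Dual k V :=
  ell k V ζ (skewY k V q R) Ω x y

/-- The linear forms `ℓ'_{xy}` associated with the twisted Hecke symmetry `R'`. -/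
def ellF' (ζ : V ≃ₗ[k] V) (q : k) (R : V ⊗[k] V →ₗ[k] V ⊗[k] V)
    (Ω : V ⊗[k] (V ⊗[k] V) →ₗ[k] k) (x y : V) : Module.Dual k V :=
  ell k V ζ (skewY k V q (Rprime k V ζ R)) Ω x y

/-- Polynomial functions on `V` (in the coordinates determined by a basis of `V*`). -/
abbrev PolyV (k : Type) [Field k] := MvPolynomial (Fin 3) k

/-- Polynomial functions on `V × V`. -/
abbrev PolyVV (k : Type) [Field k] := MvPolynomial ((Fin 3) ⊕ (Fin 3)) k

/-- The weight used for bihomogeneity: variables of the first group have weight `(1,0)`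
and variables of the second group have weight `(0,1)`; a polynomial is bihomogeneous of
bidegree `(m,n)` iff it is weighted homogeneous of weight `(m,n)`. -/
def bideg : (Fin 3) ⊕ (Fin 3) → ℕ × ℕ := Sum.elim (fun _ => (1, 0)) (fun _ => (0, 1))

/-- Coordinates of `x ∈ V` with respect to (the basis of `V` predual to) a basis `B`
of `V*`: the `i`-th coordinate function is `B i`. -/
def coords (B : Module.Basis (Fin 3) k (Module.Dual k V)) (x : V) : Fin 3 → k :=
  fun i => B i x

/-- Value at `x ∈ V` of a polynomial function on `V`. -/
def qEval (B : Module.Basis (Fin 3) k (Module.Dual k V)) (p : PolyV k) (x : V) : k :=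
  MvPolynomial.eval (coords k V B x) p

/-- Value at `(x,y) ∈ V × V` of a polynomial function on `V × V`. -/
def pEval (B : Module.Basis (Fin 3) k (Module.Dual k V)) (p : PolyVV k) (x y : V) : k :=
  MvPolynomial.eval (Sum.elim (coords k V B x) (coords k V B y)) p

/-- The polynomial functions `Δ₁, Δ₂, Δ₃` on `V × V`:  the `2×2`-minors of the matrix
with rows `(a₁(x), a₂(x), a₃(x))` and `(a'₁(y), a'₂(y), a'₃(y))`. -/
def Delta (a a' : Fin 3 → PolyV k) : Fin 3 → PolyVV k :=
  ![MvPolynomial.rename Sum.inl (a 1) * MvPolynomial.rename Sum.inr (a' 2)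
      - MvPolynomial.rename Sum.inl (a 2) * MvPolynomial.rename Sum.inr (a' 1),
    MvPolynomial.rename Sum.inl (a 0) * MvPolynomial.rename Sum.inr (a' 2)
      - MvPolynomial.rename Sum.inl (a 2) * MvPolynomial.rename Sum.inr (a' 0),
    MvPolynomial.rename Sum.inl (a 0) * MvPolynomial.rename Sum.inr (a' 1)
      - MvPolynomial.rename Sum.inl (a 1) * MvPolynomial.rename Sum.inr (a' 0)]
section Aux

theorem myKeyDvd {A : Type} [CommRing A] [IsDomain A] [UniqueFactorizationMonoid A]
    (P0 : A) : ∀ P1 P2 D : A, (∀ g : A, g ∣ P0 → g ∣ P1 → g ∣ P2 → IsUnit g) →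
      P0 ∣ P1 * D → P0 ∣ P2 * D → P0 ∣ D := by
  refine UniqueFactorizationMonoid.induction_on_prime P0 ?_ ?_ ?_
  · intro P1 P2 D hg h1 h2
    rcases mul_eq_zero.1 (zero_dvd_iff.1 h1) with h | h
    · rcases mul_eq_zero.1 (zero_dvd_iff.1 h2) with h' | h'
      · exact absurd (hg 0 dvd_rfl (h ▸ dvd_rfl) (h' ▸ dvd_rfl)) not_isUnit_zero
      · simp [h']
    · simp [h]
  · intro u hu P1 P2 D _ _ _; exact hu.dvd
  · intro a p ha hp IH P1 P2 D hg h1 h2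
    have hpd : p ∣ D := by
      have hp12 : ¬ p ∣ P1 ∨ ¬ p ∣ P2 := by
        by_contra hc; push_neg at hc
        exact hp.not_unit (hg p (dvd_mul_right p a) hc.1 hc.2)
      rcases hp12 with h | h
      · rcases hp.2.2 P1 D ((dvd_mul_right p a).trans h1) with h' | h'
        · exact absurd h' h
        · exact h'
      · rcases hp.2.2 P2 D ((dvd_mul_right p a).trans h2) with h' | h'
        · exact absurd h' h
        · exact h'
    obtain ⟨D', rfl⟩ := hpd
    have h1' : a ∣ P1 * D' := by
      have h : p * a ∣ p * (P1 * D') := by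
        have he : P1 * (p * D') = p * (P1 * D') := by ring
        exact he ▸ h1
      exact (mul_dvd_mul_iff_left hp.ne_zero).1 h
    have h2' : a ∣ P2 * D' := by
      have h : p * a ∣ p * (P2 * D') := by
        have he : P2 * (p * D') = p * (P2 * D') := by ring
        exact he ▸ h2
      exact (mul_dvd_mul_iff_left hp.ne_zero).1 h
    exact mul_dvd_mul_left p (IH P1 P2 D' (fun g hga => hg g (hga.mul_left p)) h1' h2')

lemma wedge31_add (ζ : V ≃ₗ[k] V) (x x' : V) :
    wedge31 k V ζ (x + x') = wedge31 k V ζ x + wedge31 k V ζ x' := by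
  unfold wedge31
  ext u v
  simp [TensorProduct.add_tmul, TensorProduct.tmul_add, map_add]
  abel

lemma wedge31_smul (ζ : V ≃ₗ[k] V) (c : k) (x : V) :
    wedge31 k V ζ (c • x) = c • wedge31 k V ζ x := by
  unfold wedge31
  ext u v
  simp [TensorProduct.smul_tmul', TensorProduct.tmul_smul, map_smul, smul_sub, smul_add]
  conv_rhs => rw [TensorProduct.smul_tmul, TensorProduct.smul_tmul']

/-- `ell` as a bilinear map. -/
def ellBil (ζ : V ≃ₗ[k] V) (Y : V ⊗[k] V →ₗ[k] V ⊗[k] V)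
    (Ω : V ⊗[k] (V ⊗[k] V) →ₗ[k] k) : V →ₗ[k] V →ₗ[k] Module.Dual k V :=
  LinearMap.mk₂ k (ell k V ζ Y Ω)
    (fun x x' y => by
      unfold ell; rw [wedge31_add]; ext z; simp)
    (fun c x y => by
      unfold ell; rw [wedge31_smul]; ext z; simp)
    (fun x y y' => by
      unfold ell; ext z
      simp [TensorProduct.add_tmul, map_add])
    (fun c x y => by
      unfold ell; ext z
      simp [map_smul, ← TensorProduct.smul_tmul'])

lemma master [Infinite k] [FiniteDimensional k V]
    (B : Module.Basis (Fin 3) k (Module.Dual k V))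
    (L : V →ₗ[k] V →ₗ[k] Module.Dual k V)
    (G0 G1 G2 : PolyVV k) (a a' : Fin 3 → PolyV k)
    (hg : ∀ g : PolyVV k, g ∣ G0 → g ∣ G1 → g ∣ G2 → IsUnit g)
    (hrel : ∀ x y : V, pEval k V B G0 x y • L x y =
      pEval k V B G1 x y • (∑ t, qEval k V B (a t) x • B t) +
      pEval k V B G2 x y • (∑ t, qEval k V B (a' t) y • B t)) :
    ∀ i j : Fin 3, G0 ∣ (MvPolynomial.rename Sum.inl (a i) * MvPolynomial.rename Sum.inr (a' j)
      - MvPolynomial.rename Sum.inl (a j) * MvPolynomial.rename Sum.inr (a' i)) := by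
  classical
  set e : Module.Basis (Fin 3) k V := B.dualBasis.map (Module.evalEquiv k V).symm with he
  have hBe : ∀ i j : Fin 3, B i (e j) = if i = j then 1 else 0 := by
    intro i j
    have : B i (e j) = B.dualBasis j (B i) := by
      simp [he, Module.Basis.map_apply, Module.apply_evalEquiv_symm_apply]
    rw [this, Module.Basis.dualBasis_apply_self]
  have hrepr : ∀ (x : V) (j : Fin 3), e.repr x j = B j x := by
    intro x j
    conv_rhs => rw [← e.sum_repr x]
    simp only [map_sum, map_smul, hBe, smul_eq_mul, mul_ite, mul_one, mul_zero, Finset.sum_ite_eq,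
      Finset.mem_univ, if_true]
  have hsum : ∀ x : V, ∑ j, B j x • e j = x := by
    intro x
    conv_rhs => rw [← e.sum_repr x]
    exact Finset.sum_congr rfl fun j _ => by rw [hrepr]
  -- coefficient polynomials of the bilinear map L
  set b : Fin 3 → PolyVV k := fun i => ∑ p : Fin 3, ∑ l : Fin 3,
    MvPolynomial.C (B.repr (L (e p) (e l)) i) *
      MvPolynomial.X (Sum.inl p) * MvPolynomial.X (Sum.inr l) with hbdef
  have hb : ∀ (i : Fin 3) (x y : V), pEval k V B (b i) x y = B.repr (L x y) i := by
    intro i x y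
    have hx : L x y = ∑ p : Fin 3, ∑ l : Fin 3, (B p x * B l y) • L (e p) (e l) := by
      conv_lhs => rw [← hsum x, ← hsum y]
      simp only [map_sum, LinearMap.sum_apply, map_smul, LinearMap.smul_apply, smul_smul,
        Finset.smul_sum]
      rw [Finset.sum_comm]
      exact Finset.sum_congr rfl fun p _ => Finset.sum_congr rfl fun l _ => by rw [mul_comm]
    rw [hx]
    simp only [hbdef, pEval, map_sum, map_mul, MvPolynomial.eval_C, MvPolynomial.eval_X,
      Sum.elim_inl, Sum.elim_inr, Finsupp.finset_sum_apply, map_smul, Finsupp.smul_apply,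
      smul_eq_mul, coords]
    refine Finset.sum_congr rfl fun p _ => Finset.sum_congr rfl fun l _ => by ring
  -- pointwise coefficient relations
  have hpt : ∀ (t : Fin 3) (x y : V),
      pEval k V B G0 x y * pEval k V B (b t) x y =
        pEval k V B G1 x y * qEval k V B (a t) x +
        pEval k V B G2 x y * qEval k V B (a' t) y := by
    intro t x y
    have h := congrArg (fun f : Module.Dual k V => B.repr f t) (hrel x y)
    simp only [map_add, map_smul, Finsupp.add_apply, Finsupp.smul_apply, smul_eq_mul] at h
    rw [hb t x y]
    rw [B.repr_sum_self, B.repr_sum_self] at h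
    exact h
  -- polynomial identities
  have hE : ∀ t : Fin 3, G0 * b t =
      G1 * MvPolynomial.rename Sum.inl (a t) + G2 * MvPolynomial.rename Sum.inr (a' t) := by
    intro t
    apply MvPolynomial.funext
    intro c
    set x : V := ∑ j, c (Sum.inl j) • e j with hxdef
    set y : V := ∑ j, c (Sum.inr j) • e j with hydef
    have hcx : coords k V B x = fun j => c (Sum.inl j) := by
      funext j
      simp only [coords, hxdef, map_sum, map_smul, hBe, smul_eq_mul, mul_ite, mul_one, mul_zero]
      simp [Finset.sum_ite_eq']
    have hcy : coords k V B y = fun j => c (Sum.inr j) := by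
      funext j
      simp only [coords, hydef, map_sum, map_smul, hBe, smul_eq_mul, mul_ite, mul_one, mul_zero]
      simp [Finset.sum_ite_eq']
    have hc : Sum.elim (coords k V B x) (coords k V B y) = c := by
      funext s
      cases s with
      | inl j => simp [hcx]
      | inr j => simp [hcy]
    have h := hpt t x y
    simp only [pEval, qEval, hc] at h
    simp only [map_add, map_mul, MvPolynomial.eval_rename, Function.comp_def]
    rw [h, hcx, hcy]
  -- divisibility
  intro i j
  set Ai := MvPolynomial.rename (Sum.inl : Fin 3 → Fin 3 ⊕ Fin 3) (a i)
  set Aj := MvPolynomial.rename (Sum.inl : Fin 3 → Fin 3 ⊕ Fin 3) (a j)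
  set Ai' := MvPolynomial.rename (Sum.inr : Fin 3 → Fin 3 ⊕ Fin 3) (a' i)
  set Aj' := MvPolynomial.rename (Sum.inr : Fin 3 → Fin 3 ⊕ Fin 3) (a' j)
  have h2 : G0 ∣ G2 * (Ai * Aj' - Aj * Ai') :=
    ⟨Ai * b j - Aj * b i, by linear_combination Aj * hE i - Ai * hE j⟩
  have h1 : G0 ∣ G1 * (Ai * Aj' - Aj * Ai') :=
    ⟨Aj' * b i - Ai' * b j, by linear_combination Ai' * hE j - Aj' * hE i⟩
  exact myKeyDvd G0 G1 G2 _ hg h1 h2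

end Aux

theorem stmt11 [IsAlgClosed k] (hchar : ringChar k ≠ 2)
    (hdim : Module.finrank k V = 3) (ζ : V ≃ₗ[k] V) (q : k)
    (R : V ⊗[k] V →ₗ[k] V ⊗[k] V) (hR : IsHeckeSymmetry k V q R)
    (hY : LinearMap.range (skewY k V q R) = Ups2 k V ζ)
    (ω : AlternatingMap k V k (Fin 3)) (hω : ω ≠ 0)
    (Ω : V ⊗[k] (V ⊗[k] V) →ₗ[k] k)
    (hΩ : ∀ x y z : V, Ω (wedge3 k V ζ x y z) = ω ![x, y, z])
    (hU : 1 < Module.finrank k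
      (Submodule.span k {f : Module.Dual k V | ∃ x : V, f = ellF k V ζ q R Ω x x}))
    (B : Module.Basis (Fin 3) k (Module.Dual k V))
    (a a' : Fin 3 → PolyV k)
    (ha2 : ∀ i, (a i).IsHomogeneous 2) (ha2' : ∀ i, (a' i).IsHomogeneous 2)
    (ha : ∀ x : V, ellF k V ζ q R Ω x x = ∑ i, qEval k V B (a i) x • B i)
    (ha' : ∀ y : V, ellF' k V ζ q R Ω y y = ∑ i, qEval k V B (a' i) y • B i)
    (P0 P1 P2 Q0 Q1 Q2 : PolyVV k)
    (hbih : ∀ pp ∈ ({P0, P1, P2, Q0, Q1, Q2} : Set (PolyVV k)),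
      ∃ mn : ℕ × ℕ, pp.IsWeightedHomogeneous bideg mn)
    (hPgcd : ∀ g : PolyVV k, g ∣ P0 → g ∣ P1 → g ∣ P2 → IsUnit g)
    (hQgcd : ∀ g : PolyVV k, g ∣ Q0 → g ∣ Q1 → g ∣ Q2 → IsUnit g)
    (hPrel : ∀ x y : V, pEval k V B P0 x y • ellF k V ζ q R Ω x y =
      pEval k V B P1 x y • ellF k V ζ q R Ω x x +
        pEval k V B P2 x y • ellF' k V ζ q R Ω y y)
    (hQrel : ∀ x y : V, pEval k V B Q0 x y • ellF' k V ζ q R Ω x y =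
      pEval k V B Q1 x y • ellF k V ζ q R Ω x x +
        pEval k V B Q2 x y • ellF' k V ζ q R Ω y y) :
    ∀ i : Fin 3, P0 ∣ Delta k a a' i ∧ Q0 ∣ Delta k a a' i := by
  haveI : FiniteDimensional k V := FiniteDimensional.of_finrank_eq_succ hdim
  have hP : ∀ i j : Fin 3, P0 ∣ (MvPolynomial.rename Sum.inl (a i) * MvPolynomial.rename Sum.inr (a' j)
      - MvPolynomial.rename Sum.inl (a j) * MvPolynomial.rename Sum.inr (a' i)) := by
    refine master k V B (ellBil k V ζ (skewY k V q R) Ω) P0 P1 P2 a a' hPgcd ?_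
    intro x y
    have h := hPrel x y
    rw [ha x, ha' y] at h
    simpa only [ellBil, ellF, LinearMap.mk₂_apply] using h
  have hQ : ∀ i j : Fin 3, Q0 ∣ (MvPolynomial.rename Sum.inl (a i) * MvPolynomial.rename Sum.inr (a' j)
      - MvPolynomial.rename Sum.inl (a j) * MvPolynomial.rename Sum.inr (a' i)) := by
    refine master k V B (ellBil k V ζ (skewY k V q (Rprime k V ζ R)) Ω) Q0 Q1 Q2 a a' hQgcd ?_
    intro x y
    have h := hQrel x y
    rw [ha x, ha' y] at h
    simpa only [ellBil, ellF', LinearMap.mk₂_apply] using h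
  intro i
  fin_cases i
  · exact ⟨hP 1 2, hQ 1 2⟩
  · exact ⟨hP 0 2, hQ 0 2⟩
  · exact ⟨hP 0 1, hQ 0 1⟩
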